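/- Let z ∈ ℝ³ and a(t) = (0.5 cos t + z₁, 0.5 sin t + z₂, z₃) for t ∈ [π, 2π], with c = 1. For any x = (x₁, x₂, x₃) ∉ Γ, the function h(t) = t + |x - a(t)| is strictly increasing on [π, 2π], and x is observable (i.e., h(2π) - h(π) ≥ π) if and only if x₁ ≤ z₁. -/
import Mathlib

open Set Real

/-- The semicircular orbit `a(t) = (0.5 cos t + z₁, 0.5 sin t + z₂, z₃)`. -/
noncomputable def a5 (z : EuclideanSpace ℝ (Fin 3)) (t : ℝ) : EuclideanSpace ℝ (Fin 3) :=
  (WithLp.equiv 2 (Fin 3 → ℝ)).symm ![0.5 * Real.cos t + z 0, 0.5 * Real.sin t + z 1, z 2]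

lemma norm_sub_a5 (z x : EuclideanSpace ℝ (Fin 3)) (t : ℝ) :
    ‖x - a5 z t‖ = Real.sqrt ((x 0 - (0.5 * Real.cos t + z 0))^2 +
      ((x 1 - (0.5 * Real.sin t + z 1))^2 + (x 2 - z 2)^2)) := by
  rw [EuclideanSpace.norm_eq]
  congr 1
  simp [a5, Fin.sum_univ_three, sq_abs]
  ring

lemma a5_lip (z : EuclideanSpace ℝ (Fin 3)) (s t : ℝ) :
    ‖a5 z t - a5 z s‖ ≤ 0.5 * |t - s| := by
  rw [EuclideanSpace.norm_eq]
  have key : (Real.cos t - Real.cos s)^2 + (Real.sin t - Real.sin s)^2 ≤ (t - s)^2 := by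
    have h1 := Real.one_sub_sq_div_two_le_cos (x := t - s)
    rw [Real.cos_sub] at h1
    nlinarith [Real.sin_sq_add_cos_sq t, Real.sin_sq_add_cos_sq s]
  have h2 : ∑ i, ‖(a5 z t - a5 z s) i‖ ^ 2 =
      0.25 * ((Real.cos t - Real.cos s)^2 + (Real.sin t - Real.sin s)^2) := by
    simp [a5, Fin.sum_univ_three, sq_abs]
    ring
  rw [h2]
  have h3 : 0.25 * ((Real.cos t - Real.cos s)^2 + (Real.sin t - Real.sin s)^2)
      ≤ (0.5 * |t - s|)^2 := by
    rw [mul_pow, sq_abs]; nlinarith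
  calc Real.sqrt _ ≤ Real.sqrt ((0.5 * |t - s|)^2) := Real.sqrt_le_sqrt h3
    _ = 0.5 * |t - s| := Real.sqrt_sq (by positivity)

/-- For the semicircle `a(t) = (0.5 cos t + z₁, 0.5 sin t + z₂, z₃)`, `t ∈ [π, 2π]`, `c = 1`:
for any `x ∉ Γ`, the function `h(t) = t + |x - a(t)|` is strictly increasing on `[π, 2π]`,
and `x` is observable (`h(2π) - h(π) ≥ π`) if and only if `x₁ ≤ z₁`. -/
theorem stmt5 (z x : EuclideanSpace ℝ (Fin 3)) (hx : x ∉ a5 z '' Icc π (2 * π)) :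
    StrictMonoOn (fun t => t + ‖x - a5 z t‖) (Icc π (2 * π)) ∧
    (π ≤ ((2 * π) + ‖x - a5 z (2 * π)‖) - (π + ‖x - a5 z π‖) ↔ x 0 ≤ z 0) := by
  constructor
  · intro s _ t _ hst
    have h1 : ‖x - a5 z s‖ - ‖x - a5 z t‖ ≤ ‖a5 z t - a5 z s‖ := by
      have := norm_sub_norm_le (x - a5 z s) (x - a5 z t)
      have e : (x - a5 z s) - (x - a5 z t) = a5 z t - a5 z s := by abel
      rwa [e] at this
    have h2 := a5_lip z s t
    rw [abs_of_pos (by linarith : (0:ℝ) < t - s)] at h2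
    simp only
    linarith
  · have e1 : ‖x - a5 z π‖ = Real.sqrt ((x 0 - z 0 + 0.5)^2 + ((x 1 - z 1)^2 + (x 2 - z 2)^2)) := by
      rw [norm_sub_a5]; norm_num [Real.cos_pi, Real.sin_pi]; ring_nf
    have e2 : ‖x - a5 z (2*π)‖ =
        Real.sqrt ((x 0 - z 0 - 0.5)^2 + ((x 1 - z 1)^2 + (x 2 - z 2)^2)) := by
      rw [norm_sub_a5]; norm_num [Real.cos_two_pi, Real.sin_two_pi]; ring_nf
    rw [e1, e2]
    constructor
    · intro h
      have h' : Real.sqrt ((x 0 - z 0 + 0.5)^2 + ((x 1 - z 1)^2 + (x 2 - z 2)^2))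
          ≤ Real.sqrt ((x 0 - z 0 - 0.5)^2 + ((x 1 - z 1)^2 + (x 2 - z 2)^2)) := by linarith
      have := (Real.sqrt_le_sqrt_iff (by positivity)).mp h'
      nlinarith
    · intro h
      have h' : (x 0 - z 0 + 0.5)^2 + ((x 1 - z 1)^2 + (x 2 - z 2)^2)
          ≤ (x 0 - z 0 - 0.5)^2 + ((x 1 - z 1)^2 + (x 2 - z 2)^2) := by nlinarith
      have := Real.sqrt_le_sqrt h'
      linarith
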